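/- Let Q be a finite quiver without sinks over a field k and L = L(Q) the Leavitt path algebra. For each vertex i ∈ Q₀ and each m ≥ 0, set X_{i,m} = span_k{γ*η : γ, η paths in Q with t(γ) = t(η), s(γ) = s(η) = i, and η of length m}. Then: (1) the set {γ*η : t(γ) = t(η), s(γ) = i = s(η), length(η) = m} is k-linearly independent in L; (2) X_{i,m} ⊆ X_{i,m+1} for all m (via the second Cuntz–Krieger relations γ*η = Σ_{α∈Q₁, s(α)=t(η)} (αγ)*(αη)), and e_i L e_i = ∪_{m≥0} X_{i,m}. -/

import Mathlib

noncomputable section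
open scoped Classical

/-- The Koszul sign `(-1)^e`, for an integer exponent `e`. -/
def ksign (e : ℤ) : ℤ := if Even e then 1 else -1

/-- A `ℤ`-graded vector space over `k`. -/
structure GradedSpace (k : Type) [Field k] : Type 1 where
  carrier : Type
  [acg : AddCommGroup carrier]
  [mod : Module k carrier]
  grading : ℤ → Submodule k carrier

attribute [instance] GradedSpace.acg GradedSpace.mod

/-! ## Quivers, Leavitt path algebras and radical square zero algebras -/

section Quivers

/-- a finite quiver `Q = (Q₀, Q₁; s, t)` -/
structure QuiverData : Type 1 where
  V : Type
  A : Type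
  [fintypeV : Fintype V]
  [fintypeA : Fintype A]
  [decV : DecidableEq V]
  [decA : DecidableEq A]
  src : A → V
  tgt : A → V

attribute [instance] QuiverData.fintypeV QuiverData.fintypeA QuiverData.decV QuiverData.decA

/-- `Q` has no sinks: every vertex is the source of some arrow. -/
def QuiverData.NoSinks (Q : QuiverData) : Prop := ∀ v : Q.V, ∃ a : Q.A, Q.src a = v

/-- generators of the Leavitt path algebra: vertices, arrows and ghost arrows -/
inductive LGen (Q : QuiverData) : Type
  | vertex : Q.V → LGen Q
  | arrow : Q.A → LGen Q
  | ghost : Q.A → LGen Q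

variable (k : Type) [Field k] (Q : QuiverData)

open FreeAlgebra

/-- The defining relations of the Leavitt path algebra `L(Q)`: the path algebra relations
of the double quiver `Q̄` together with the first and second Cuntz–Krieger relations. -/
inductive LeavittRel : FreeAlgebra k (LGen Q) → FreeAlgebra k (LGen Q) → Prop
  | vertex_mul (i j : Q.V) :
      LeavittRel (ι k (LGen.vertex i) * ι k (LGen.vertex j))
        (if i = j then ι k (LGen.vertex i) else 0)
  | sum_vertices : LeavittRel (∑ i : Q.V, ι k (LGen.vertex i)) 1
  | arrow_tgt (a : Q.A) :
      LeavittRel (ι k (LGen.vertex (Q.tgt a)) * ι k (LGen.arrow a)) (ι k (LGen.arrow a))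
  | arrow_src (a : Q.A) :
      LeavittRel (ι k (LGen.arrow a) * ι k (LGen.vertex (Q.src a))) (ι k (LGen.arrow a))
  | ghost_src (a : Q.A) :
      LeavittRel (ι k (LGen.vertex (Q.src a)) * ι k (LGen.ghost a)) (ι k (LGen.ghost a))
  | ghost_tgt (a : Q.A) :
      LeavittRel (ι k (LGen.ghost a) * ι k (LGen.vertex (Q.tgt a))) (ι k (LGen.ghost a))
  | ck1 (a b : Q.A) (h : Q.src a = Q.src b) :
      LeavittRel (ι k (LGen.arrow a) * ι k (LGen.ghost b))
        (if a = b then ι k (LGen.vertex (Q.tgt a)) else 0)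
  | ck2 (v : Q.V) :
      LeavittRel (∑ a ∈ Finset.univ.filter (fun a => Q.src a = v),
          ι k (LGen.ghost a) * ι k (LGen.arrow a))
        (ι k (LGen.vertex v))

/-- the Leavitt path algebra `L = L(Q)` over `k` -/
abbrev LeavittAlg := RingQuot (LeavittRel k Q)

/-- the canonical algebra map from the free algebra onto `L(Q)` -/
abbrev leavittMk : FreeAlgebra k (LGen Q) →ₐ[k] LeavittAlg k Q :=
  RingQuot.mkAlgHom k (LeavittRel k Q)

/-- the image of a generator in `L(Q)` -/
def lgen (g : LGen Q) : LeavittAlg k Q := leavittMk k Q (ι k g)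

/-- the idempotent `e_i ∈ L(Q)` attached to a vertex -/
def lvert (i : Q.V) : LeavittAlg k Q := lgen k Q (LGen.vertex i)

/-- the degree of a generator: `|e_i| = 0`, `|α| = 1`, `|α*| = -1` -/
def lgenDeg : LGen Q → ℤ
  | LGen.vertex _ => 0
  | LGen.arrow _ => 1
  | LGen.ghost _ => -1

/-- The canonical `ℤ`-grading of the Leavitt path algebra: the degree-`n` component is
spanned by the monomials in the generators of total degree `n`. -/
def leavittGrading (n : ℤ) : Submodule k (LeavittAlg k Q) :=
  Submodule.span k {x | ∃ w : List (LGen Q),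
    (w.map (lgenDeg Q)).sum = n ∧ x = (w.map (lgen k Q)).prod}

/-- The Leavitt path algebra `L(Q)` as a graded space (it is viewed as a dg algebra with
zero differential). -/
def LeavittSpace : GradedSpace k where
  carrier := LeavittAlg k Q
  grading := leavittGrading k Q

/-- generators of the path algebra `kQ` -/
inductive PGen (Q : QuiverData) : Type
  | vertex : Q.V → PGen Q
  | arrow : Q.A → PGen Q

/-- the defining relations of the radical square zero algebra `kQ/J²` -/
inductive RadSqRel : FreeAlgebra k (PGen Q) → FreeAlgebra k (PGen Q) → Prop
  | vertex_mul (i j : Q.V) :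
      RadSqRel (ι k (PGen.vertex i) * ι k (PGen.vertex j))
        (if i = j then ι k (PGen.vertex i) else 0)
  | sum_vertices : RadSqRel (∑ i : Q.V, ι k (PGen.vertex i)) 1
  | arrow_tgt (a : Q.A) :
      RadSqRel (ι k (PGen.vertex (Q.tgt a)) * ι k (PGen.arrow a)) (ι k (PGen.arrow a))
  | arrow_src (a : Q.A) :
      RadSqRel (ι k (PGen.arrow a) * ι k (PGen.vertex (Q.src a))) (ι k (PGen.arrow a))
  | arrow_orth (a : Q.A) (j : Q.V) (h : j ≠ Q.tgt a) :
      RadSqRel (ι k (PGen.vertex j) * ι k (PGen.arrow a)) 0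
  | arrow_orth' (a : Q.A) (j : Q.V) (h : j ≠ Q.src a) :
      RadSqRel (ι k (PGen.arrow a) * ι k (PGen.vertex j)) 0
  | rad_sq (a b : Q.A) : RadSqRel (ι k (PGen.arrow a) * ι k (PGen.arrow b)) 0

/-- the radical square zero algebra `Λ = kQ/J²` -/
abbrev RadSqAlg := RingQuot (RadSqRel k Q)

end Quivers

section Paths

/-- `PathOk Q s t l`: the list of arrows `l = [α_n, …, α_1]` is a path from `s` to `t`
(composable arrows read from right to left). -/
def PathOk (Q : QuiverData) (s t : Q.V) : List Q.A → Prop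
  | [] => s = t
  | a :: l => Q.tgt a = t ∧ PathOk Q s (Q.src a) l

/-- a path `p = α_n ⋯ α_2 α_1` in the quiver `Q`, stored as the list `[α_n, …, α_1]` -/
structure QPath (Q : QuiverData) : Type where
  source : Q.V
  target : Q.V
  arrows : List Q.A
  ok : PathOk Q source target arrows

variable (k : Type) [Field k] (Q : QuiverData)

/-- the element `p = α_n ⋯ α_1 ∈ L(Q)` attached to a path -/
def pathElem (p : QPath Q) : LeavittAlg k Q :=
  (p.arrows.map (fun a => lgen k Q (LGen.arrow a))).prod * lvert k Q p.source

/-- the element `p* = α_1* α_2* ⋯ α_n* ∈ L(Q)` attached to a path -/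
def ghostElem (p : QPath Q) : LeavittAlg k Q :=
  lvert k Q p.source * (p.arrows.reverse.map (fun a => lgen k Q (LGen.ghost a))).prod

/-- extend a path by an arrow starting at its target -/
def QPath.cons (p : QPath Q) (a : Q.A) (h : Q.src a = p.target) : QPath Q :=
  ⟨p.source, Q.tgt a, a :: p.arrows, ⟨rfl, by rw [h]; exact p.ok⟩⟩

/-- the corner projection `x ↦ e_i x e_i` of `L(Q)` -/
def cornerMap (i : Q.V) : LeavittAlg k Q →ₗ[k] LeavittAlg k Q :=
  (LinearMap.mulLeft k (lvert k Q i)).comp (LinearMap.mulRight k (lvert k Q i))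

/-- pairs `(γ, η)` of paths with `t(γ) = t(η)`, `s(γ) = s(η) = i` and `η` of length `m` -/
def GEPairs (i : Q.V) (m : ℕ) : Type :=
  {pq : QPath Q × QPath Q //
    pq.1.target = pq.2.target ∧ pq.1.source = i ∧ pq.2.source = i ∧
      pq.2.arrows.length = m}

/-- the subspace `X_{i,m} = span_k {γ*η : t(γ) = t(η), s(γ) = s(η) = i, ℓ(η) = m}` -/
def Xim (i : Q.V) (m : ℕ) : Submodule k (LeavittAlg k Q) :=
  Submodule.span k
    (Set.range fun pq : GEPairs Q i m => ghostElem k Q pq.1.1 * pathElem k Q pq.1.2)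

end Paths

/-!
Spanning: left multiplication by a vertex, an arrow or a ghost arrow sends a monomial `γ*η`
with `t(γ) = t(η)` to `0` or to another such monomial, so these monomials span `L`, and the
corner `e_i L e_i` is spanned by those with `s(γ) = s(η) = i`. Inserting the second
Cuntz–Krieger relation at `t(η)` between `γ*` and `η` lengthens both paths by one arrow.

Independence: `L` acts on the vector space with basis the pairs `(x, n)` of an infinite path
`x` and an integer `n`: `e_v` projects onto the paths starting at `v`, an arrow `α` strips a
leading `α` and raises `n`, and `α*` prepends `α` and lowers `n`. Fix an infinite path `x`
starting at `t(η₀)` (it exists because `Q` has no sinks). For `ℓ(η) = ℓ(η₀) = m`, the monomial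
`γ*η` sends `(η₀x, 0)` to `(γx, m - ℓ(γ))` if `η = η₀` and to `0` otherwise; the integer
recovers `ℓ(γ)`, and then `γx` recovers `γ`. Hence the coefficient of `(γ₀x, m - ℓ(γ₀))` is a
linear form taking the value `1` on `γ₀*η₀` and `0` on the other monomials.
-/

section Relations

variable {k : Type} [Field k] {Q : QuiverData}

theorem lvert_mul_lvert (i j : Q.V) :
    lvert k Q i * lvert k Q j = if i = j then lvert k Q i else 0 := by
  simpa [lvert, lgen, apply_ite] using RingQuot.mkAlgHom_rel k (LeavittRel.vertex_mul (k := k) i j)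

theorem sum_lvert : ∑ i : Q.V, lvert k Q i = 1 := by
  simpa [lvert, lgen] using RingQuot.mkAlgHom_rel k (LeavittRel.sum_vertices (k := k) (Q := Q))

theorem lvert_tgt_mul_arrow (a : Q.A) :
    lvert k Q (Q.tgt a) * lgen k Q (.arrow a) = lgen k Q (.arrow a) := by
  simpa [lvert, lgen] using RingQuot.mkAlgHom_rel k (LeavittRel.arrow_tgt (k := k) a)

theorem arrow_mul_lvert_src (a : Q.A) :
    lgen k Q (.arrow a) * lvert k Q (Q.src a) = lgen k Q (.arrow a) := by
  simpa [lvert, lgen] using RingQuot.mkAlgHom_rel k (LeavittRel.arrow_src (k := k) a)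

theorem lvert_src_mul_ghost (a : Q.A) :
    lvert k Q (Q.src a) * lgen k Q (.ghost a) = lgen k Q (.ghost a) := by
  simpa [lvert, lgen] using RingQuot.mkAlgHom_rel k (LeavittRel.ghost_src (k := k) a)

theorem ghost_mul_lvert_tgt (a : Q.A) :
    lgen k Q (.ghost a) * lvert k Q (Q.tgt a) = lgen k Q (.ghost a) := by
  simpa [lvert, lgen] using RingQuot.mkAlgHom_rel k (LeavittRel.ghost_tgt (k := k) a)

theorem sum_ghost_mul_arrow (v : Q.V) :
    ∑ a ∈ Finset.univ.filter (fun a => Q.src a = v),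
      lgen k Q (.ghost a) * lgen k Q (.arrow a) = lvert k Q v := by
  simpa [lvert, lgen] using RingQuot.mkAlgHom_rel k (LeavittRel.ck2 (k := k) (Q := Q) v)

theorem arrow_mul_lvert (a : Q.A) (j : Q.V) :
    lgen k Q (.arrow a) * lvert k Q j = if Q.src a = j then lgen k Q (.arrow a) else 0 := by
  rw [← arrow_mul_lvert_src, mul_assoc, lvert_mul_lvert]
  split_ifs with h <;> simp [h]

theorem lvert_mul_ghost (j : Q.V) (a : Q.A) :
    lvert k Q j * lgen k Q (.ghost a) = if j = Q.src a then lgen k Q (.ghost a) else 0 := by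
  rw [← lvert_src_mul_ghost, ← mul_assoc, lvert_mul_lvert]
  split_ifs with h <;> simp [h]

theorem ghost_mul_lvert (a : Q.A) (j : Q.V) :
    lgen k Q (.ghost a) * lvert k Q j = if Q.tgt a = j then lgen k Q (.ghost a) else 0 := by
  rw [← ghost_mul_lvert_tgt, mul_assoc, lvert_mul_lvert]
  split_ifs with h <;> simp [h]

theorem arrow_mul_ghost (a b : Q.A) :
    lgen k Q (.arrow a) * lgen k Q (.ghost b) = if a = b then lvert k Q (Q.tgt a) else 0 := by
  by_cases hs : Q.src a = Q.src b
  · simpa [lvert, lgen, apply_ite] using RingQuot.mkAlgHom_rel k (LeavittRel.ck1 (k := k) a b hs)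
  · rw [if_neg (by rintro rfl; exact hs rfl), ← arrow_mul_lvert_src, mul_assoc, lvert_mul_ghost,
      if_neg hs, mul_zero]

end Relations

section Words

variable {k : Type} [Field k] {Q : QuiverData}

theorem pathOk_append_singleton {l : List Q.A} {b : Q.A} {s t : Q.V} :
    PathOk Q s t (l ++ [b]) ↔ s = Q.src b ∧ PathOk Q (Q.tgt b) t l := by
  induction l generalizing t with
  | nil => exact and_comm
  | cons a l ih => simp only [List.cons_append, PathOk, ih]; tauto

theorem PathOk.target_eq {l : List Q.A} {s t t' : Q.V} (h : PathOk Q s t l)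
    (h' : PathOk Q s t' l) : t = t' := by
  cases l with
  | nil => exact h.symm.trans h'
  | cons a l => exact h.1.symm.trans h'.1

theorem QPath.ext_of_source_of_arrows {p q : QPath Q} (hs : p.source = q.source)
    (ha : p.arrows = q.arrows) : p = q := by
  obtain ⟨s, t, l, hp⟩ := p
  obtain ⟨s', t', l', hq⟩ := q
  obtain rfl : s = s' := hs
  obtain rfl : l = l' := ha
  obtain rfl : t = t' := hp.target_eq hq
  rfl

variable (k) in
def pathWord (l : List Q.A) (s : Q.V) : LeavittAlg k Q :=
  (l.map fun a => lgen k Q (.arrow a)).prod * lvert k Q s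

variable (k) in
def ghostWord (l : List Q.A) (s : Q.V) : LeavittAlg k Q :=
  lvert k Q s * (l.reverse.map fun a => lgen k Q (.ghost a)).prod

theorem pathElem_eq_pathWord (p : QPath Q) : pathElem k Q p = pathWord k p.arrows p.source :=
  rfl

theorem ghostElem_eq_ghostWord (p : QPath Q) :
    ghostElem k Q p = ghostWord k p.arrows p.source :=
  rfl

@[simp] theorem pathWord_nil (s : Q.V) : pathWord k [] s = lvert k Q s := by
  simp [pathWord]

@[simp] theorem ghostWord_nil (s : Q.V) : ghostWord k [] s = lvert k Q s := by
  simp [ghostWord]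

theorem pathWord_cons (a : Q.A) (l : List Q.A) (s : Q.V) :
    pathWord k (a :: l) s = lgen k Q (.arrow a) * pathWord k l s := by
  simp [pathWord, mul_assoc]

theorem ghostWord_cons (a : Q.A) (l : List Q.A) (s : Q.V) :
    ghostWord k (a :: l) s = ghostWord k l s * lgen k Q (.ghost a) := by
  simp [ghostWord, mul_assoc]

theorem lvert_mul_pathWord {l : List Q.A} {s t : Q.V} (hl : PathOk Q s t l) :
    lvert k Q t * pathWord k l s = pathWord k l s := by
  cases l with
  | nil => obtain rfl : s = t := hl; simp [lvert_mul_lvert]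
  | cons a l => rw [pathWord_cons, ← mul_assoc, ← hl.1, lvert_tgt_mul_arrow]

theorem ghostWord_mul_lvert {l : List Q.A} {s t : Q.V} (hl : PathOk Q s t l) :
    ghostWord k l s * lvert k Q t = ghostWord k l s := by
  cases l with
  | nil => obtain rfl : s = t := hl; simp [lvert_mul_lvert]
  | cons a l => rw [ghostWord_cons, mul_assoc, ← hl.1, ghost_mul_lvert_tgt]

theorem pathWord_mul_lvert (l : List Q.A) (s j : Q.V) :
    pathWord k l s * lvert k Q j = if s = j then pathWord k l s else 0 := by
  rw [pathWord, mul_assoc, lvert_mul_lvert]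
  split_ifs <;> simp

theorem lvert_mul_ghostWord (j : Q.V) (l : List Q.A) (s : Q.V) :
    lvert k Q j * ghostWord k l s = if j = s then ghostWord k l s else 0 := by
  rw [ghostWord, ← mul_assoc, lvert_mul_lvert]
  split_ifs with h <;> simp [h]

theorem ghostWord_append_singleton (l : List Q.A) (b : Q.A) :
    ghostWord k (l ++ [b]) (Q.src b) = lgen k Q (.ghost b) * ghostWord k l (Q.tgt b) := by
  simp only [ghostWord, List.reverse_append, List.reverse_cons, List.reverse_nil,
    List.nil_append, List.cons_append, List.map_cons, List.prod_cons]
  rw [← mul_assoc, lvert_src_mul_ghost, ← mul_assoc, ghost_mul_lvert_tgt]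

theorem ghost_mul_ghostWord (a : Q.A) (l : List Q.A) (s : Q.V) :
    lgen k Q (.ghost a) * ghostWord k l s =
      if s = Q.tgt a then ghostWord k (l ++ [a]) (Q.src a) else 0 := by
  split_ifs with h
  · rw [h, ghostWord_append_singleton]
  · rw [ghostWord, ← mul_assoc, ghost_mul_lvert, if_neg (Ne.symm h), zero_mul]

theorem arrow_mul_ghostWord_append_singleton (a b : Q.A) (l : List Q.A) :
    lgen k Q (.arrow a) * ghostWord k (l ++ [b]) (Q.src b) =
      if a = b then ghostWord k l (Q.tgt b) else 0 := by
  rw [ghostWord_append_singleton, ← mul_assoc, arrow_mul_ghost]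
  split_ifs with h
  · rw [h, lvert_mul_ghostWord, if_pos rfl]
  · rw [zero_mul]

end Words

section Filtration

variable {k : Type} [Field k] {Q : QuiverData}

theorem ghostElem_mul_pathElem_eq_sum (γ η : QPath Q) (h : γ.target = η.target) :
    ghostElem k Q γ * pathElem k Q η =
      ∑ a ∈ (Finset.univ.filter (fun a => Q.src a = η.target)).attach,
        ghostElem k Q (γ.cons Q a.1
            (by rw [(Finset.mem_filter.mp a.2).2]; exact h.symm)) *
          pathElem k Q (η.cons Q a.1 ((Finset.mem_filter.mp a.2).2)) := by
  calc ghostElem k Q γ * pathElem k Q η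
      = ghostWord k γ.arrows γ.source * lvert k Q η.target * pathWord k η.arrows η.source := by
        rw [ghostElem_eq_ghostWord, pathElem_eq_pathWord, ghostWord_mul_lvert (h ▸ γ.ok)]
    _ = ∑ a ∈ Finset.univ.filter (fun a => Q.src a = η.target),
          ghostWord k (a :: γ.arrows) γ.source * pathWord k (a :: η.arrows) η.source := by
        simp only [← sum_ghost_mul_arrow, Finset.mul_sum, Finset.sum_mul, ghostWord_cons,
          pathWord_cons, mul_assoc]
    _ = _ := (Finset.sum_attach _ _).symm

theorem ghostElem_mul_pathElem_mem_Xim {i : Q.V} {γ η : QPath Q} (ht : γ.target = η.target)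
    (hγ : γ.source = i) (hη : η.source = i) :
    ghostElem k Q γ * pathElem k Q η ∈ Xim k Q i η.arrows.length :=
  Submodule.subset_span ⟨⟨(γ, η), ht, hγ, hη, rfl⟩, rfl⟩

theorem Xim_le_succ (i : Q.V) (m : ℕ) : Xim k Q i m ≤ Xim k Q i (m + 1) := by
  rw [Xim, Submodule.span_le]
  rintro _ ⟨⟨⟨γ, η⟩, ht, hγ, hη, rfl⟩, rfl⟩
  change ghostElem k Q γ * pathElem k Q η ∈ _
  rw [ghostElem_mul_pathElem_eq_sum γ η ht]
  exact Submodule.sum_mem _ fun a _ =>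
    ghostElem_mul_pathElem_mem_Xim (γ := γ.cons Q a.1 _) (η := η.cons Q a.1 _) rfl hγ hη

variable (k Q) in
def ghostPathSpan : Submodule k (LeavittAlg k Q) :=
  Submodule.span k
    {x | ∃ γ η : QPath Q, γ.target = η.target ∧ x = ghostElem k Q γ * pathElem k Q η}

theorem ghostWord_mul_pathWord_mem {lγ lη : List Q.A} {s s' t : Q.V} (hγ : PathOk Q s t lγ)
    (hη : PathOk Q s' t lη) :
    ghostWord k lγ s * pathWord k lη s' ∈ ghostPathSpan k Q :=
  Submodule.subset_span ⟨⟨s, t, lγ, hγ⟩, ⟨s', t, lη, hη⟩, rfl, rfl⟩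

theorem one_mem_ghostPathSpan : (1 : LeavittAlg k Q) ∈ ghostPathSpan k Q := by
  rw [← sum_lvert]
  refine Submodule.sum_mem _ fun v _ => ?_
  simpa [lvert_mul_lvert] using
    ghostWord_mul_pathWord_mem (k := k) (lγ := []) (lη := []) (rfl : v = v) rfl

theorem arrow_mul_ghostWord_mul_pathWord_mem (a : Q.A) (γ η : QPath Q)
    (ht : γ.target = η.target) :
    lgen k Q (.arrow a) * (ghostWord k γ.arrows γ.source * pathWord k η.arrows η.source) ∈
      ghostPathSpan k Q := by
  rw [← mul_assoc]
  rcases List.eq_nil_or_concat' γ.arrows with hnil | ⟨l, b, hlb⟩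
  · have hst : γ.source = η.target := by have := γ.ok; rw [hnil] at this; exact this.trans ht
    rw [hnil, ghostWord_nil, arrow_mul_lvert]
    split_ifs with hsrc
    · have hη : PathOk Q η.source (Q.tgt a) (a :: η.arrows) := ⟨rfl, hsrc.trans hst ▸ η.ok⟩
      simpa [← pathWord_cons, lvert_mul_pathWord hη] using
        ghostWord_mul_pathWord_mem (k := k) (lγ := []) (rfl : Q.tgt a = Q.tgt a) hη
    · simp
  · have hγ := γ.ok
    rw [hlb, pathOk_append_singleton] at hγ
    rw [hlb, hγ.1, arrow_mul_ghostWord_append_singleton]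
    split_ifs
    · exact ghostWord_mul_pathWord_mem hγ.2 (ht ▸ η.ok)
    · simp

theorem lgen_mul_mem_ghostPathSpan (g : LGen Q) {x : LeavittAlg k Q}
    (hx : x ∈ ghostPathSpan k Q) : lgen k Q g * x ∈ ghostPathSpan k Q := by
  induction hx using Submodule.span_induction with
  | zero => simp
  | add x y _ _ hx hy => rw [mul_add]; exact add_mem hx hy
  | smul c x _ hx => rw [mul_smul_comm]; exact Submodule.smul_mem _ _ hx
  | mem x hx =>
    obtain ⟨γ, η, ht, rfl⟩ := hx
    rw [ghostElem_eq_ghostWord, pathElem_eq_pathWord]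
    cases g with
    | vertex v =>
      rw [← mul_assoc, ← lvert, lvert_mul_ghostWord]
      split_ifs
      · exact ghostWord_mul_pathWord_mem γ.ok (ht ▸ η.ok)
      · simp
    | ghost a =>
      rw [← mul_assoc, ghost_mul_ghostWord]
      split_ifs with h
      · exact ghostWord_mul_pathWord_mem (pathOk_append_singleton.mpr ⟨rfl, h ▸ γ.ok⟩)
          (ht ▸ η.ok)
      · simp
    | arrow a => exact arrow_mul_ghostWord_mul_pathWord_mem a γ η ht

theorem ghostPathSpan_eq_top : ghostPathSpan k Q = ⊤ := by
  rw [eq_top_iff]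
  rintro u -
  obtain ⟨u, rfl⟩ := RingQuot.mkAlgHom_surjective k (LeavittRel k Q) u
  suffices ∀ y ∈ ghostPathSpan k Q, leavittMk k Q u * y ∈ ghostPathSpan k Q by
    simpa using this 1 one_mem_ghostPathSpan
  induction u using FreeAlgebra.induction with
  | grade0 r => intro y hy; simpa [Algebra.smul_def] using Submodule.smul_mem _ r hy
  | grade1 g => exact fun y => lgen_mul_mem_ghostPathSpan g
  | mul u v hu hv => intro y hy; rw [map_mul, mul_assoc]; exact hu _ (hv y hy)
  | add u v hu hv => intro y hy; rw [map_add, add_mul]; exact add_mem (hu y hy) (hv y hy)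

theorem range_cornerMap (i : Q.V) :
    LinearMap.range (cornerMap k Q i) = ⨆ m : ℕ, Xim k Q i m := by
  apply le_antisymm
  · rw [LinearMap.range_eq_map, ← ghostPathSpan_eq_top, ghostPathSpan, Submodule.map_span,
      Submodule.span_le]
    rintro _ ⟨_, ⟨γ, η, ht, rfl⟩, rfl⟩
    simp only [cornerMap, LinearMap.comp_apply, LinearMap.mulLeft_apply,
      LinearMap.mulRight_apply, ghostElem_eq_ghostWord, pathElem_eq_pathWord, mul_assoc,
      pathWord_mul_lvert]
    rw [← mul_assoc, lvert_mul_ghostWord]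
    split_ifs with hγ hη
    · exact Submodule.mem_iSup_of_mem _ (ghostElem_mul_pathElem_mem_Xim ht hγ.symm hη)
    all_goals simp
  · refine iSup_le fun m => ?_
    rw [Xim, Submodule.span_le]
    rintro _ ⟨⟨⟨γ, η⟩, ht, hγ, hη, -⟩, rfl⟩
    refine ⟨ghostElem k Q γ * pathElem k Q η, ?_⟩
    simp only [cornerMap, LinearMap.comp_apply, LinearMap.mulLeft_apply,
      LinearMap.mulRight_apply, ghostElem_eq_ghostWord, pathElem_eq_pathWord, mul_assoc,
      pathWord_mul_lvert, if_pos hη]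
    rw [← mul_assoc, lvert_mul_ghostWord, if_pos hγ.symm]

end Filtration

section InfinitePaths

variable {Q : QuiverData}

variable (Q) in
/-- `x.get 0` is the first arrow traversed, so `x` begins with the path `l = [α_n, …, α_1]`
iff `x.take l.length = l.reverse`. -/
def InfPath : Type :=
  {x : Stream' Q.A // ∀ n, Q.src (x.get (n + 1)) = Q.tgt (x.get n)}

namespace InfPath

def source (x : InfPath Q) : Q.V := Q.src x.1.head

def tail (x : InfPath Q) : InfPath Q := ⟨x.1.tail, fun n => x.2 (n + 1)⟩

def drop (m : ℕ) (x : InfPath Q) : InfPath Q :=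
  ⟨x.1.drop m, fun n => by simpa [Stream'.get_drop, Nat.add_assoc] using x.2 (m + n)⟩

def cons (a : Q.A) (x : InfPath Q) (h : x.source = Q.tgt a) : InfPath Q :=
  ⟨Stream'.cons a x.1, fun n => by cases n with
    | zero => exact h
    | succ n => exact x.2 n⟩

@[simp] theorem drop_zero (x : InfPath Q) : x.drop 0 = x := rfl

@[simp] theorem val_drop (m : ℕ) (x : InfPath Q) : (x.drop m).1 = x.1.drop m := rfl

theorem source_tail (x : InfPath Q) : x.tail.source = Q.tgt x.1.head := x.2 0

@[simp] theorem source_cons (a : Q.A) (x : InfPath Q) (h : x.source = Q.tgt a) :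
    (x.cons a h).source = Q.src a := rfl

@[simp] theorem head_cons (a : Q.A) (x : InfPath Q) (h : x.source = Q.tgt a) :
    (x.cons a h).1.head = a := rfl

@[simp] theorem tail_cons (a : Q.A) (x : InfPath Q) (h : x.source = Q.tgt a) :
    (x.cons a h).tail = x := rfl

theorem cons_head_tail (x : InfPath Q) : x.tail.cons x.1.head (source_tail x) = x :=
  Subtype.ext (Stream'.eta x.1)

theorem ext_of_take_of_drop {x y : InfPath Q} (m : ℕ) (htake : x.1.take m = y.1.take m)
    (hdrop : x.1.drop m = y.1.drop m) : x = y := by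
  apply Subtype.ext
  rw [← Stream'.append_take_drop m x.1, ← Stream'.append_take_drop m y.1, htake, hdrop]

theorem exists_source_eq (hQ : Q.NoSinks) (v : Q.V) : ∃ x : InfPath Q, x.source = v := by
  choose next hnext using hQ
  refine ⟨⟨Stream'.iterate (next ∘ Q.tgt) (next v), fun n => ?_⟩, hnext v⟩
  rw [Stream'.get_succ_iterate', Function.comp_apply, hnext]

end InfPath

end InfinitePaths

section PathRepresentation

variable {k : Type} [Field k] {Q : QuiverData}

open Finsupp

variable (k Q) in
abbrev PathModule : Type := (InfPath Q × ℤ) →₀ k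

variable (k) in
def genAct : LGen Q → InfPath Q × ℤ → PathModule k Q
  | .vertex v, (x, n) => if x.source = v then single (x, n) 1 else 0
  | .arrow a, (x, n) => if x.1.head = a then single (x.tail, n + 1) 1 else 0
  | .ghost a, (x, n) => if h : x.source = Q.tgt a then single (x.cons a h, n - 1) 1 else 0

variable (k) in
def genEnd (g : LGen Q) : Module.End k (PathModule k Q) := linearCombination k (genAct k g)

@[simp] theorem genEnd_vertex_single (v : Q.V) (x : InfPath Q) (n : ℤ) :
    genEnd k (.vertex v) (single (x, n) 1) = if x.source = v then single (x, n) 1 else 0 := by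
  simp [genEnd, genAct]

@[simp] theorem genEnd_arrow_single (a : Q.A) (x : InfPath Q) (n : ℤ) :
    genEnd k (.arrow a) (single (x, n) 1) =
      if x.1.head = a then single (x.tail, n + 1) 1 else 0 := by
  simp [genEnd, genAct]

@[simp] theorem genEnd_ghost_single (a : Q.A) (x : InfPath Q) (n : ℤ) :
    genEnd k (.ghost a) (single (x, n) 1) =
      if h : x.source = Q.tgt a then single (x.cons a h, n - 1) 1 else 0 := by
  simp [genEnd, genAct]

theorem freeAlgebra_lift_genEnd_rel ⦃u v : FreeAlgebra k (LGen Q)⦄ (h : LeavittRel k Q u v) :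
    FreeAlgebra.lift k (genEnd k) u = FreeAlgebra.lift k (genEnd k) v := by
  induction h with
  | vertex_mul i j =>
    ext ⟨x, n⟩ : 2
    rcases eq_or_ne i j with rfl | hij
    · by_cases h : x.source = i <;> simp [h]
    · by_cases h : x.source = j <;> simp [h, hij, Ne.symm hij]
  | sum_vertices => ext ⟨x, n⟩ : 2; simp
  | arrow_tgt a =>
    ext ⟨x, n⟩ : 2
    by_cases h : x.1.head = a <;> simp [h, InfPath.source_tail]
  | arrow_src a =>
    ext ⟨x, n⟩ : 2
    by_cases h : x.1.head = a <;> by_cases h' : x.source = Q.src a <;>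
      simp_all [InfPath.source]
  | ghost_src a => ext ⟨x, n⟩ : 2; by_cases h : x.source = Q.tgt a <;> simp [h]
  | ghost_tgt a => ext ⟨x, n⟩ : 2; by_cases h : x.source = Q.tgt a <;> simp [h]
  | ck1 a b hs =>
    ext ⟨x, n⟩ : 2
    rcases eq_or_ne a b with rfl | hab
    · by_cases h : x.source = Q.tgt a <;> simp [h]
    · by_cases h : x.source = Q.tgt b <;> simp [h, hab, Ne.symm hab]
  | ck2 v =>
    ext ⟨x, n⟩ : 2
    have hterm (a : Q.A) : genEnd k (.ghost a)
        (if x.1.head = a then single (x.tail, n + 1) 1 else 0) =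
        if x.1.head = a then single (x, n) 1 else 0 := by
      by_cases h : x.1.head = a
      · subst h; simp [InfPath.source_tail, InfPath.cons_head_tail]
      · simp [h]
    simp [hterm, show Q.src x.1.head = x.source from rfl]

variable (k Q) in
def pathRep : LeavittAlg k Q →ₐ[k] Module.End k (PathModule k Q) :=
  RingQuot.liftAlgHom k ⟨FreeAlgebra.lift k (genEnd k), freeAlgebra_lift_genEnd_rel⟩

theorem pathRep_lgen (g : LGen Q) : pathRep k Q (lgen k Q g) = genEnd k g := by
  simp [pathRep, lgen]

theorem pathRep_pathWord_single (l : List Q.A) (s : Q.V) (x : InfPath Q) (n : ℤ) :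
    pathRep k Q (pathWord k l s) (single (x, n) 1) =
      if x.source = s ∧ x.1.take l.length = l.reverse then
        single (x.drop l.length, n + l.length) 1
      else 0 := by
  induction l with
  | nil => simp [pathRep_lgen, lvert]
  | cons a l ih =>
    rw [pathWord_cons, map_mul, Module.End.mul_apply, ih]
    by_cases h : x.source = s ∧ x.1.take l.length = l.reverse
    · have hdrop : (x.drop l.length).tail = x.drop (l.length + 1) :=
        Subtype.ext Stream'.tail_drop'
      simp [h, pathRep_lgen, hdrop, Stream'.take_succ', add_assoc]
    · rw [if_neg h, map_zero, if_neg]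
      rw [List.length_cons, Stream'.take_succ', List.reverse_cons, List.append_singleton_inj]
      tauto

theorem exists_pathRep_ghostWord_single {l : List Q.A} {s : Q.V} {x : InfPath Q}
    (hl : PathOk Q s x.source l) (n : ℤ) :
    ∃ y : InfPath Q, y.source = s ∧ y.1.take l.length = l.reverse ∧
      y.1.drop l.length = x.1 ∧
      pathRep k Q (ghostWord k l s) (single (x, n) 1) = single (y, n - l.length) 1 := by
  induction l generalizing x n with
  | nil =>
    obtain rfl : s = x.source := hl
    exact ⟨x, rfl, rfl, rfl, by simp [pathRep_lgen, lvert]⟩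
  | cons a l ih =>
    obtain ⟨y, hys, hytake, hydrop, hy⟩ := ih (x := x.cons a hl.1.symm) hl.2 (n - 1)
    have hya : y.1.get l.length = a := by
      simpa [Stream'.get_drop] using congrArg (Stream'.get · 0) hydrop
    refine ⟨y, hys, ?_, ?_, ?_⟩
    · rw [List.length_cons, Stream'.take_succ', hytake, hya, List.reverse_cons]
    · rw [List.length_cons, ← Stream'.tail_drop', hydrop]
      rfl
    · rw [ghostWord_cons, map_mul, Module.End.mul_apply, pathRep_lgen, genEnd_ghost_single,
        dif_pos hl.1.symm, hy]
      congr 2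
      push_cast [List.length_cons]
      ring

end PathRepresentation

section LinearIndependence

variable {k : Type} [Field k] {Q : QuiverData}

open Finsupp

theorem exists_dual_ghostElem_mul_pathElem_eq_ite (hQ : Q.NoSinks) {i : Q.V} {m : ℕ}
    (pq₀ : GEPairs Q i m) : ∃ φ : Module.Dual k (LeavittAlg k Q), ∀ pq : GEPairs Q i m,
      φ (ghostElem k Q pq.1.1 * pathElem k Q pq.1.2) = if pq.1 = pq₀.1 then 1 else 0 := by
  obtain ⟨⟨γ₀, η₀⟩, ht₀, hγ₀, hη₀, hlen₀⟩ := pq₀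
  obtain ⟨x₀, hx₀⟩ := InfPath.exists_source_eq hQ η₀.target
  obtain ⟨X, hXs, hXtake, hXdrop, -⟩ :=
    exists_pathRep_ghostWord_single (k := k) (x := x₀) (hx₀ ▸ η₀.ok) 0
  obtain ⟨Y, -, hYtake, hYdrop, -⟩ :=
    exists_pathRep_ghostWord_single (k := k) (x := x₀) (hx₀ ▸ ht₀ ▸ γ₀.ok) 0
  refine ⟨lapply (Y, (m : ℤ) - γ₀.arrows.length) ∘ₗ
    LinearMap.applyₗ (single (X, 0) 1 : PathModule k Q) ∘ₗ (pathRep k Q).toLinearMap, ?_⟩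
  rintro ⟨⟨γ, η⟩, ht, hγ, hη, rfl⟩
  simp only [LinearMap.comp_apply, LinearMap.applyₗ_apply_apply, AlgHom.toLinearMap_apply,
    lapply_apply, ghostElem_eq_ghostWord, pathElem_eq_pathWord, map_mul, Module.End.mul_apply,
    pathRep_pathWord_single, Prod.mk.injEq]
  by_cases hηη₀ : η = η₀
  · subst hηη₀
    obtain ⟨y, -, hytake, hydrop, hy⟩ :=
      exists_pathRep_ghostWord_single (k := k) (x := x₀) (hx₀ ▸ ht ▸ γ.ok) (0 + η.arrows.length)
    have hXη : X.drop η.arrows.length = x₀ := Subtype.ext hXdrop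
    rw [if_pos ⟨hXs, hXtake⟩, hXη, hy, single_apply, zero_add]
    simp only [Prod.mk.injEq, and_true]
    refine if_congr ⟨?_, ?_⟩ rfl rfl
    · rintro ⟨rfl, hlen⟩
      have hlen : γ.arrows.length = γ₀.arrows.length := by omega
      refine QPath.ext_of_source_of_arrows (hγ.trans hγ₀.symm) (List.reverse_injective ?_)
      rw [← hytake, ← hYtake, hlen]
    · rintro rfl
      exact ⟨InfPath.ext_of_take_of_drop _ (hytake.trans hYtake.symm) (hydrop.trans hYdrop.symm),
        rfl⟩
  · rw [if_neg, map_zero, Finsupp.zero_apply, if_neg (by tauto)]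
    rintro ⟨-, htake⟩
    refine hηη₀ (QPath.ext_of_source_of_arrows (hη.trans hη₀.symm) (List.reverse_injective ?_))
    rw [← htake, ← hXtake, hlen₀]

theorem linearIndependent_ghostElem_mul_pathElem (hQ : Q.NoSinks) (i : Q.V) (m : ℕ) :
    LinearIndependent k
      (fun pq : GEPairs Q i m => ghostElem k Q pq.1.1 * pathElem k Q pq.1.2) := by
  choose φ hφ using exists_dual_ghostElem_mul_pathElem_eq_ite (k := k) hQ (i := i) (m := m)
  exact .of_pairwise_dual_eq_zero_one _ φ
    (fun pq pq' h => (hφ pq pq').trans (if_neg fun h' => h (Subtype.ext h'.symm)))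
    (fun pq => by simp [hφ])

end LinearIndependence

/-- **Lemma 4.1 of Chen–Li–Wang.**  Let `Q` be a finite quiver without sinks over a field
`k` and `L = L(Q)` the Leavitt path algebra.  For every vertex `i ∈ Q₀` and every `m ≥ 0`:
(1) the set `{γ*η : γ, η paths with t(γ) = t(η), s(γ) = s(η) = i, ℓ(η) = m}` is
`k`-linearly independent in `L`;
(2) `X_{i,m} ⊆ X_{i,m+1}` (via the second Cuntz–Krieger relations
`γ*η = Σ_{α ∈ Q₁, s(α) = t(η)} (αγ)*(αη)`), and `e_i L e_i = ⋃_{m ≥ 0} X_{i,m}`. -/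
theorem leavitt_corner_filtration (k : Type) [Field k] (Q : QuiverData) (hQ : Q.NoSinks)
    (i : Q.V) (m : ℕ) :
    LinearIndependent k
      (fun pq : GEPairs Q i m => ghostElem k Q pq.1.1 * pathElem k Q pq.1.2) ∧
    (∀ (γ η : QPath Q) (h : γ.target = η.target),
      ghostElem k Q γ * pathElem k Q η =
        ∑ a ∈ (Finset.univ.filter (fun a => Q.src a = η.target)).attach,
          ghostElem k Q (γ.cons Q a.1
              (by rw [(Finset.mem_filter.mp a.2).2]; exact h.symm)) *
            pathElem k Q (η.cons Q a.1 ((Finset.mem_filter.mp a.2).2))) ∧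
    Xim k Q i m ≤ Xim k Q i (m + 1) ∧
    LinearMap.range (cornerMap k Q i) = ⨆ m' : ℕ, Xim k Q i m' :=
  ⟨linearIndependent_ghostElem_mul_pathElem hQ i m, ghostElem_mul_pathElem_eq_sum,
    Xim_le_succ i m, range_cornerMap i⟩
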